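/- arXiv:1812.04470 — 4 statements merged into one kernel-verified Lean document; each statement's English description precedes it below -/
import Mathlib

section
/- Let H₀, H_i, H_j be complex Hilbert spaces, Ω ∈ H₀, n a natural number, and let x₁,…,x_n : H₀ → H_i and y₁,…,y_n : H₀ → H_j be bounded linear operators such that for all indices 1 ≤ a,b,c,d ≤ n the operator x_b* x_a on H₀ commutes with the operator y_d* y_c on H₀ (where * denotes the Hilbert-space adjoint). Then the sum Σ_{k,l=1}^n ⟨ y_l* y_k x_l* x_k Ω , Ω ⟩ is a nonnegative real number. -/
open scoped InnerProductSpace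

open ContinuousLinearMap

noncomputable section ConnesFusionAux

variable {H : Type*} [NormedAddCommGroup H] [InnerProductSpace ℂ H] [CompleteSpace H] {n : ℕ}

/-- Inclusion of the `q`-th coordinate into `PiLp 2`. -/
def cfJ (q : Fin n) : H →L[ℂ] PiLp 2 (fun _ : Fin n => H) :=
  LinearMap.mkContinuous
    ((WithLp.linearEquiv 2 ℂ (∀ _ : Fin n, H)).symm.toLinearMap ∘ₗ
      LinearMap.single ℂ (fun _ : Fin n => H) q) 1
    (fun u => by
      simp only [LinearMap.coe_comp, Function.comp_apply, LinearEquiv.coe_coe,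
        LinearMap.coe_single, one_mul]
      rw [WithLp.linearEquiv_symm_apply]
      simpa using (PiLp.nnnorm_equiv_symm_single 2 (fun _ : Fin n => H) q u).le)

/-- Projection onto the `q`-th coordinate from `PiLp 2`. -/
def cfP (p : Fin n) : PiLp 2 (fun _ : Fin n => H) →L[ℂ] H := PiLp.proj 2 (fun _ : Fin n => H) p

lemma cfJ_apply (q : Fin n) (u : H) (i : Fin n) :
    cfJ (H := H) q u i = if i = q then u else 0 := by
  simp [cfJ, LinearMap.mkContinuous_apply, WithLp.linearEquiv_symm_apply, Pi.single_apply]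

lemma cfP_apply (p : Fin n) (v : PiLp 2 (fun _ : Fin n => H)) : cfP p v = v p := by simp [cfP]


instance piLpComplete : CompleteSpace (PiLp 2 (fun _ : Fin n => H)) :=
  inferInstance

lemma components_sum (w : Fin n → PiLp 2 (fun _ : Fin n => H)) (i : Fin n) :
    (∑ q, w q) i = ∑ q, w q i := by
  change cfP i (∑ q, w q) = _
  rw [map_sum]
  simp [cfP_apply]

lemma cfP_comp_cfJ (p q : Fin n) :
    (cfP (H := H) p).comp (cfJ q) = if p = q then ContinuousLinearMap.id ℂ H else 0 := by
  ext u
  by_cases h : p = q <;> simp [cfP_apply, cfJ_apply, h]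

lemma sum_cfJ_comp_cfP :
    ∑ q : Fin n, (cfJ (H := H) q).comp (cfP q) = ContinuousLinearMap.id ℂ _ := by
  ext v i
  rw [ContinuousLinearMap.sum_apply, components_sum]
  simp [cfJ_apply, cfP_apply]

lemma inner_cfJ_left (q : Fin n) (u : H) (v : PiLp 2 (fun _ : Fin n => H)) :
    ⟪cfJ q u, v⟫_ℂ = ⟪u, v q⟫_ℂ := by
  rw [PiLp.inner_apply]
  rw [Finset.sum_eq_single q]
  · simp [cfJ_apply]
  · intro i _ hi
    simp [cfJ_apply, hi]
  · simp

lemma adjoint_cfP (p : Fin n) : adjoint (cfP (H := H) p) = cfJ p := by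
  symm
  rw [ContinuousLinearMap.eq_adjoint_iff]
  intro u v
  rw [inner_cfJ_left, cfP_apply]

lemma adjoint_cfJ (q : Fin n) : adjoint (cfJ (H := H) q) = cfP q := by
  rw [← adjoint_cfP, adjoint_adjoint]

/-- The `(p,q)` entry of an operator on `PiLp 2 (fun _ : Fin n => H)`. -/
def ent (f : PiLp 2 (fun _ : Fin n => H) →L[ℂ] PiLp 2 (fun _ : Fin n => H)) (p q : Fin n) :
    H →L[ℂ] H :=
  (cfP p).comp (f.comp (cfJ q))

lemma ent_mul (f g : PiLp 2 (fun _ : Fin n => H) →L[ℂ] PiLp 2 (fun _ : Fin n => H)) (p q : Fin n) :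
    ent (f * g) p q = ∑ r : Fin n, (ent f p r).comp (ent g r q) := by
  ext u
  have hgv : g (cfJ q u) = ∑ r, cfJ r (cfP r (g (cfJ q u))) := by
    conv_lhs => rw [← ContinuousLinearMap.id_apply (R₁ := ℂ) (g (cfJ q u)), ← sum_cfJ_comp_cfP]
    rw [ContinuousLinearMap.sum_apply]
    simp [ContinuousLinearMap.comp_apply]
  calc ent (f * g) p q u = cfP p (f (g (cfJ q u))) := rfl
  _ = cfP p (f (∑ r, cfJ r (cfP r (g (cfJ q u))))) := by rw [← hgv]
  _ = ∑ r, cfP p (f (cfJ r (cfP r (g (cfJ q u))))) := by rw [map_sum, map_sum]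
  _ = (∑ r : Fin n, (ent f p r).comp (ent g r q)) u := by
      rw [ContinuousLinearMap.sum_apply]
      simp [ent, ContinuousLinearMap.comp_apply]

lemma ent_adjoint (f : PiLp 2 (fun _ : Fin n => H) →L[ℂ] PiLp 2 (fun _ : Fin n => H)) (p q : Fin n) :
    ent (adjoint f) p q = adjoint (ent f q p) := by
  simp only [ent, adjoint_comp, adjoint_cfP, adjoint_cfJ, adjoint_adjoint]
  rw [ContinuousLinearMap.comp_assoc]


lemma apply_eq_sum_ent (f : PiLp 2 (fun _ : Fin n => H) →L[ℂ] PiLp 2 (fun _ : Fin n => H))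
    (v : PiLp 2 (fun _ : Fin n => H)) (i : Fin n) : (f v) i = ∑ q, ent f i q (v q) := by
  have hv : v = ∑ q, cfJ q (cfP q v) := by
    conv_lhs => rw [← ContinuousLinearMap.id_apply (R₁ := ℂ) v, ← sum_cfJ_comp_cfP]
    rw [ContinuousLinearMap.sum_apply]
    simp [ContinuousLinearMap.comp_apply]
  conv_lhs => rw [hv]
  rw [map_sum]
  rw [show (∑ q, f (cfJ q (cfP q v))) i = cfP i (∑ q, f (cfJ q (cfP q v))) from rfl, map_sum]
  simp [ent, cfP_apply, ContinuousLinearMap.comp_apply]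

lemma ent_ext {f g : PiLp 2 (fun _ : Fin n => H) →L[ℂ] PiLp 2 (fun _ : Fin n => H)}
    (h : ∀ p q, ent f p q = ent g p q) : f = g := by
  ext v i
  rw [show (f v) i = ∑ q, ent f i q (v q) from apply_eq_sum_ent f v i]
  rw [show (g v) i = ∑ q, ent g i q (v q) from apply_eq_sum_ent g v i]
  simp [h]

variable {K : Type*} [NormedAddCommGroup K] [InnerProductSpace ℂ K] [CompleteSpace K]

/-- The row operator `v ↦ ∑ k, x k (v k)`. -/
def Xop (x : Fin n → (H →L[ℂ] K)) : PiLp 2 (fun _ : Fin n => H) →L[ℂ] K :=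
  ∑ k, (x k).comp (cfP k)

/-- The positive operator with entries `(x l)† ∘ (x k)`. -/
def Aop (x : Fin n → (H →L[ℂ] K)) : PiLp 2 (fun _ : Fin n => H) →L[ℂ] PiLp 2 (fun _ : Fin n => H) :=
  (adjoint (Xop x)).comp (Xop x)

lemma Aop_nonneg (x : Fin n → (H →L[ℂ] K)) : 0 ≤ Aop x := by
  rw [ContinuousLinearMap.nonneg_iff_isPositive]
  simpa [Aop, ContinuousLinearMap.one_def] using (isPositive_one (E := K) (𝕜 := ℂ)).adjoint_conj (Xop x)

lemma ent_Aop (x : Fin n → (H →L[ℂ] K)) (p q : Fin n) :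
    ent (Aop x) p q = (adjoint (x p)).comp (x q) := by
  have hadj : adjoint (Xop x) = ∑ k, (cfJ k).comp (adjoint (x k)) := by
    rw [Xop, map_sum]
    exact Finset.sum_congr rfl fun k _ => by rw [adjoint_comp, adjoint_cfP]
  ext u
  have h1 : Xop x (cfJ q u) = x q u := by
    rw [Xop, ContinuousLinearMap.sum_apply]
    rw [Finset.sum_eq_single q]
    · simp [cfP_apply, cfJ_apply, ContinuousLinearMap.comp_apply]
    · intro i _ hi
      simp [cfP_apply, cfJ_apply, hi, ContinuousLinearMap.comp_apply]
    · simp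
  have h2 : ∀ w : K, cfP p (adjoint (Xop x) w) = adjoint (x p) w := by
    intro w
    rw [hadj, ContinuousLinearMap.sum_apply, map_sum]
    rw [Finset.sum_eq_single p]
    · simp [cfP_apply, cfJ_apply, ContinuousLinearMap.comp_apply]
    · intro i _ hi
      simp [cfP_apply, cfJ_apply, Ne.symm hi, ContinuousLinearMap.comp_apply]
    · simp
  calc ent (Aop x) p q u = cfP p (adjoint (Xop x) (Xop x (cfJ q u))) := rfl
  _ = adjoint (x p) (x q u) := by rw [h1, h2]
  _ = ((adjoint (x p)).comp (x q)) u := rfl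

/-- Diagonal operator. -/
def Dop (T : H →L[ℂ] H) : PiLp 2 (fun _ : Fin n => H) →L[ℂ] PiLp 2 (fun _ : Fin n => H) :=
  ∑ i, (cfJ i).comp (T.comp (cfP i))

lemma ent_Dop (T : H →L[ℂ] H) (p q : Fin n) :
    ent (Dop (n := n) T) p q = if p = q then T else 0 := by
  ext u
  rw [show ent (Dop (n := n) T) p q u = cfP p ((Dop (n := n) T) (cfJ q u)) from rfl]
  rw [Dop, ContinuousLinearMap.sum_apply, map_sum]
  rw [Finset.sum_eq_single q]
  · by_cases h : p = q <;>
      simp [cfP_apply, cfJ_apply, ContinuousLinearMap.comp_apply, h]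
  · intro i _ hi
    simp [cfP_apply, cfJ_apply, hi, ContinuousLinearMap.comp_apply]
  · simp

lemma adjoint_Dop (T : H →L[ℂ] H) :
    adjoint (Dop (n := n) T) = Dop (n := n) (adjoint T) := by
  rw [Dop, map_sum, Dop]
  exact Finset.sum_congr rfl fun i _ => by
    rw [adjoint_comp, adjoint_comp, adjoint_cfP, adjoint_cfJ, ContinuousLinearMap.comp_assoc]

lemma ent_commute (R' : PiLp 2 (fun _ : Fin n => H) →L[ℂ] PiLp 2 (fun _ : Fin n => H))
    (T : H →L[ℂ] H) (h : Commute R' (Dop (n := n) T)) (p q : Fin n) :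
    Commute (ent R' p q) T := by
  have hl : ent (R' * Dop (n := n) T) p q = (ent R' p q).comp T := by
    rw [ent_mul, Finset.sum_eq_single q]
    · rw [ent_Dop]; simp
    · intro r _ hr; rw [ent_Dop]; simp [hr]
    · simp
  have hr' : ent (Dop (n := n) T * R') p q = T.comp (ent R' p q) := by
    rw [ent_mul, Finset.sum_eq_single p]
    · rw [ent_Dop]; simp
    · intro r _ hr; rw [ent_Dop]; simp [Ne.symm hr]
    · simp
  show ent R' p q * T = T * ent R' p q
  rw [ContinuousLinearMap.mul_def, ContinuousLinearMap.mul_def, ← hl, ← hr', h.eq]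

lemma commute_Aop_Dop (x : Fin n → (H →L[ℂ] K)) (T : H →L[ℂ] H)
    (h : ∀ p q, Commute ((adjoint (x p)).comp (x q)) T) :
    Commute (Aop x) (Dop (n := n) T) := by
  show Aop x * Dop (n := n) T = Dop (n := n) T * Aop x
  apply ent_ext
  intro p q
  have hl : ent (Aop x * Dop (n := n) T) p q = ((adjoint (x p)).comp (x q)).comp T := by
    rw [ent_mul, Finset.sum_eq_single q]
    · rw [ent_Aop, ent_Dop]; simp
    · intro r _ hr; rw [ent_Aop, ent_Dop]; simp [hr]
    · simp
  have hr' : ent (Dop (n := n) T * Aop x) p q = T.comp ((adjoint (x p)).comp (x q)) := by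
    rw [ent_mul, Finset.sum_eq_single p]
    · rw [ent_Dop, ent_Aop]; simp
    · intro r _ hr; rw [ent_Dop, ent_Aop]; simp [Ne.symm hr]
    · simp
  rw [hl, hr']
  rw [← ContinuousLinearMap.mul_def, ← ContinuousLinearMap.mul_def]
  exact h p q


end ConnesFusionAux

section CStarAux

variable {V : Type*} [CStarAlgebra V] [PartialOrder V] [StarOrderedRing V]

lemma commute_of_mem_elemental {a b c : V}
    (h1 : Commute a b) (h2 : Commute a (star b)) (hc : c ∈ StarAlgebra.elemental ℂ a) :
    Commute c b := by
  let S : StarSubalgebra ℂ V :=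
  { carrier := {z : V | Commute z b ∧ Commute z (star b)}
    mul_mem' := fun hz hw => ⟨hz.1.mul_left hw.1, hz.2.mul_left hw.2⟩
    add_mem' := fun hz hw => ⟨hz.1.add_left hw.1, hz.2.add_left hw.2⟩
    algebraMap_mem' := fun r => ⟨Algebra.commutes r b, Algebra.commutes r (star b)⟩
    star_mem' := fun hz => ⟨by simpa using hz.2.star_star, by simpa using hz.1.star_star⟩ }
  have hS : IsClosed (S : Set V) := by
    apply IsClosed.inter
    · exact isClosed_eq (continuous_mul_right b) (continuous_mul_left b)
    · exact isClosed_eq (continuous_mul_right (star b)) (continuous_mul_left (star b))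
  exact ((StarAlgebra.elemental.le_of_mem hS ⟨h1, h2⟩) hc).1

lemma cfc_mem_elemental' (f : ℂ → ℂ) (a : V) [ha : IsStarNormal a] :
    cfc f a ∈ StarAlgebra.elemental ℂ a := by
  by_cases hf : ContinuousOn f (spectrum ℂ a)
  · rw [cfc_apply f a ha hf, cfcHom_eq_of_isStarNormal]
    exact SetLike.coe_mem _
  · rw [cfc_apply_of_not_continuousOn a hf]
    exact zero_mem _

/-- Square-root function on `ℂ` (via the real part). -/
noncomputable def sqrtC : ℂ → ℂ := fun z => (Real.sqrt z.re : ℂ)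

lemma continuous_sqrtC : Continuous sqrtC :=
  Complex.continuous_ofReal.comp (Real.continuous_sqrt.comp Complex.continuous_re)

lemma sqrtC_selfAdjoint {a : V} (ha : 0 ≤ a) : IsSelfAdjoint (cfc sqrtC a) := by
  have : IsSelfAdjoint a := .of_nonneg ha
  rw [IsSelfAdjoint, ← cfc_star]
  exact cfc_congr fun z _ => by simp [sqrtC, Complex.conj_ofReal]

lemma sqrtC_mul_self {a : V} (ha : 0 ≤ a) : cfc sqrtC a * cfc sqrtC a = a := by
  have hsa : IsSelfAdjoint a := .of_nonneg ha
  rw [← cfc_mul sqrtC sqrtC a continuous_sqrtC.continuousOn continuous_sqrtC.continuousOn]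
  have h1 : ∀ z ∈ spectrum ℂ a, sqrtC z * sqrtC z = z := by
    intro z hz
    have hre : z = (z.re : ℂ) := hsa.mem_spectrum_eq_re hz
    have hmem : z.re ∈ spectrum ℝ a := by
      apply spectrum.of_algebraMap_mem ℂ
      show (algebraMap ℝ ℂ z.re) ∈ spectrum ℂ a
      rw [show (algebraMap ℝ ℂ z.re) = (z.re : ℂ) from rfl, ← hre]
      exact hz
    have hnn : 0 ≤ z.re :=
      (StarOrderedRing.nonneg_iff_spectrum_nonneg (R := ℝ) a hsa).mp ha z.re hmem
    rw [sqrtC, ← Complex.ofReal_mul, Real.mul_self_sqrt hnn, ← hre]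
  rw [cfc_congr h1, cfc_id' ℂ a]

end CStarAux
set_option maxHeartbeats 1000000 in
/-- Positivity of the sesquilinear form defining the Connes fusion of two
modules.  Let `x₁,…,xₙ : H₀ → H_i` and `y₁,…,yₙ : H₀ → H_j` be bounded operators such that all
the "two-point" operators `xᵦ* xₐ` commute with all the `y_d* y_c` on `H₀`.  Then
`∑_{k,l} ⟨ yₗ* yₖ xₗ* xₖ Ω , Ω ⟩` is a nonnegative real number.  (Here `⟨·,·⟩` is linear in the
first variable, so `⟨v, Ω⟩` is rendered as `⟪Ω, v⟫_ℂ` in Mathlib's convention.) -/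
theorem statement3
    {H₀ Hi Hj : Type*}
    [NormedAddCommGroup H₀] [InnerProductSpace ℂ H₀] [CompleteSpace H₀]
    [NormedAddCommGroup Hi] [InnerProductSpace ℂ Hi] [CompleteSpace Hi]
    [NormedAddCommGroup Hj] [InnerProductSpace ℂ Hj] [CompleteSpace Hj]
    (Ω : H₀) (n : ℕ)
    (x : Fin n → (H₀ →L[ℂ] Hi)) (y : Fin n → (H₀ →L[ℂ] Hj))
    (hcomm : ∀ a b c d : Fin n,
      Commute ((ContinuousLinearMap.adjoint (x b)).comp (x a))
        ((ContinuousLinearMap.adjoint (y d)).comp (y c))) :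
    0 ≤ (∑ k : Fin n, ∑ l : Fin n,
        (inner (𝕜 := ℂ) Ω
          ((ContinuousLinearMap.adjoint (y l))
            ((y k) ((ContinuousLinearMap.adjoint (x l)) ((x k) Ω)))))).re ∧
    (∑ k : Fin n, ∑ l : Fin n,
        (inner (𝕜 := ℂ) Ω
          ((ContinuousLinearMap.adjoint (y l))
            ((y k) ((ContinuousLinearMap.adjoint (x l)) ((x k) Ω)))))).im = 0 := by
  classical
  have hA : 0 ≤ Aop x := Aop_nonneg x
  have hsa : IsSelfAdjoint (Aop x) := .of_nonneg hA
  have hnormal : IsStarNormal (Aop x) := hsa.isStarNormal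
  set R := cfc sqrtC (Aop x) with hRdef
  have hRsa : IsSelfAdjoint R := sqrtC_selfAdjoint hA
  have hRR : R * R = Aop x := sqrtC_mul_self hA
  have hAD : ∀ c d : Fin n, Commute (Aop x) (Dop (n := n) ((adjoint (y d)).comp (y c))) :=
    fun c d => commute_Aop_Dop x _ (fun p q => (hcomm q p c d))
  have hRD : ∀ c d : Fin n, Commute R (Dop (n := n) ((adjoint (y d)).comp (y c))) := by
    intro c d
    refine commute_of_mem_elemental (hAD c d) ?_ (cfc_mem_elemental' sqrtC (Aop x))
    have hst : star (Dop (n := n) ((adjoint (y d)).comp (y c))) =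
        Dop (n := n) ((adjoint (y c)).comp (y d)) := by
      rw [ContinuousLinearMap.star_eq_adjoint, adjoint_Dop, adjoint_comp, adjoint_adjoint]
    rw [hst]
    exact hAD d c
  have hE : ∀ p q c d : Fin n, Commute (ent R p q) ((adjoint (y d)).comp (y c)) :=
    fun p q c d => ent_commute R _ (hRD c d) p q
  have hadjR : adjoint R = R := by
    rw [← ContinuousLinearMap.star_eq_adjoint]; exact hRsa
  have hEsym : ∀ p q : Fin n, ent R p q = adjoint (ent R q p) := by
    intro p q
    conv_lhs => rw [← hadjR]
    rw [ent_adjoint]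
  set e : Fin n → Fin n → (H₀ →L[ℂ] H₀) := fun p q => ent R p q with he
  set u : Fin n → Fin n → Hj := fun p k => (y k) (e p k Ω) with hu
  set z : Fin n → Hj := fun p => ∑ k, u p k with hz
  have hterm : ∀ k l : Fin n,
      (inner (𝕜 := ℂ) Ω ((adjoint (y l)) ((y k) ((adjoint (x l)) ((x k) Ω))))) =
      ∑ p, (inner (𝕜 := ℂ) (u p l) (u p k)) := by
    intro k l
    have h1 : (adjoint (x l)) ((x k) Ω) = ∑ p, (e l p) ((e p k) Ω) := by
      rw [show (adjoint (x l)) ((x k) Ω) = (((adjoint (x l)).comp (x k)) Ω) from rfl,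
          ← ent_Aop x l k, ← hRR, ent_mul, ContinuousLinearMap.sum_apply]
      simp [he, ContinuousLinearMap.comp_apply]
    rw [h1, map_sum (y k), map_sum (adjoint (y l)), inner_sum]
    refine Finset.sum_congr rfl fun p _ => ?_
    have hc : Commute (adjoint (e p l)) ((adjoint (y l)).comp (y k)) := by
      have h2 := (hE p l l k).star_star
      rw [ContinuousLinearMap.star_eq_adjoint, ContinuousLinearMap.star_eq_adjoint,
          adjoint_comp, adjoint_adjoint] at h2
      exact h2
    have hswap : (e l p) ((e p k) Ω) = (adjoint (e p l)) ((e p k) Ω) := by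
      show (ent R l p) ((ent R p k) Ω) = (adjoint (ent R p l)) ((ent R p k) Ω)
      rw [hEsym l p]
    calc inner (𝕜 := ℂ) Ω ((adjoint (y l)) ((y k) ((e l p) ((e p k) Ω))))
        = inner (𝕜 := ℂ) Ω ((((adjoint (y l)).comp (y k)).comp (adjoint (e p l)))
            ((e p k) Ω)) := by rw [hswap]; rfl
      _ = inner (𝕜 := ℂ) Ω (((adjoint (e p l)).comp ((adjoint (y l)).comp (y k)))
            ((e p k) Ω)) := by
          rw [show ((adjoint (y l)).comp (y k)).comp (adjoint (e p l)) =
              (adjoint (e p l)).comp ((adjoint (y l)).comp (y k)) from hc.symm.eq]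
      _ = inner (𝕜 := ℂ) ((e p l) Ω) (((adjoint (y l)).comp (y k)) ((e p k) Ω)) := by
          rw [ContinuousLinearMap.comp_apply, adjoint_inner_right]
      _ = inner (𝕜 := ℂ) ((y l) ((e p l) Ω)) ((y k) ((e p k) Ω)) := by
          rw [ContinuousLinearMap.comp_apply, adjoint_inner_right]
  have hsum : (∑ k : Fin n, ∑ l : Fin n,
      (inner (𝕜 := ℂ) Ω ((adjoint (y l)) ((y k) ((adjoint (x l)) ((x k) Ω)))))) =
      ∑ p, (inner (𝕜 := ℂ) (z p) (z p)) := by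
    calc (∑ k : Fin n, ∑ l : Fin n,
        (inner (𝕜 := ℂ) Ω ((adjoint (y l)) ((y k) ((adjoint (x l)) ((x k) Ω))))))
        = ∑ k : Fin n, ∑ l : Fin n, ∑ p, (inner (𝕜 := ℂ) (u p l) (u p k)) :=
          Finset.sum_congr rfl fun k _ => Finset.sum_congr rfl fun l _ => hterm k l
      _ = ∑ k : Fin n, ∑ p, ∑ l : Fin n, (inner (𝕜 := ℂ) (u p l) (u p k)) :=
          Finset.sum_congr rfl fun k _ => Finset.sum_comm
      _ = ∑ p, ∑ k : Fin n, ∑ l : Fin n, (inner (𝕜 := ℂ) (u p l) (u p k)) :=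
          Finset.sum_comm
      _ = ∑ p, ∑ l : Fin n, ∑ k : Fin n, (inner (𝕜 := ℂ) (u p l) (u p k)) :=
          Finset.sum_congr rfl fun p _ => Finset.sum_comm
      _ = ∑ p, (inner (𝕜 := ℂ) (z p) (z p)) := by
          refine Finset.sum_congr rfl fun p _ => ?_
          rw [hz, sum_inner]
          exact Finset.sum_congr rfl fun l _ => (inner_sum _ _ _).symm
  have hreal : (∑ k : Fin n, ∑ l : Fin n,
      (inner (𝕜 := ℂ) Ω ((adjoint (y l)) ((y k) ((adjoint (x l)) ((x k) Ω)))))) =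
      ((∑ p, ‖z p‖ ^ 2 : ℝ) : ℂ) := by
    rw [hsum]
    push_cast
    exact Finset.sum_congr rfl fun p _ => inner_self_eq_norm_sq_to_K (𝕜 := ℂ) (z p)
  constructor
  · rw [hreal, Complex.ofReal_re]
    positivity
  · rw [hreal, Complex.ofReal_im]
end

section
/- Let H₀, H_i, H_j, H_k be complex Hilbert spaces, Ω ∈ H₀, n a natural number, and let x₁,…,x_n : H₀ → H_i, y₁,…,y_n : H₀ → H_j, z₁,…,z_n : H₀ → H_k be bounded linear operators such that the three families of operators on H₀ given by {x_b* x_a}, {y_d* y_c}, {z_f* z_e} (for all index choices) pairwise commute: every x_b* x_a commutes with every y_d* y_c and with every z_f* z_e, and every y_d* y_c commutes with every z_f* z_e. Then the sum Σ_{k,l=1}^n ⟨ x_l* x_k y_l* y_k z_l* z_k Ω , Ω ⟩ is a nonnegative real number. -/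
open scoped InnerProductSpace
open scoped ENNReal

set_option synthInstance.maxHeartbeats 1000000
set_option maxHeartbeats 1000000

noncomputable section ConnesFusionAux

open ContinuousLinearMap

/-! ### A commutation lemma for the continuous functional calculus -/

lemma commute_cfc_of_commute {E : Type*} [NormedAddCommGroup E] [InnerProductSpace ℂ E]
    [CompleteSpace E] (a b : E →L[ℂ] E) (hab : Commute b a)
    (f : ℝ → ℝ) : Commute b (cfc f a) := by
  refine cfc_cases (fun t => Commute b t) a f (Commute.zero_right b) fun hf ha' => ?_
  suffices H : ∀ g : C(spectrum ℝ a, ℝ), Commute b (cfcHom ha' g) from H _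
  have hcont : Continuous (cfcHom ha' (R := ℝ)) := (cfcHom_isClosedEmbedding ha').continuous
  intro g
  induction g using ContinuousMap.induction_on_of_compact with
  | const r =>
    have h0 : (ContinuousMap.const (spectrum ℝ a) r) = algebraMap ℝ C(spectrum ℝ a, ℝ) r := rfl
    rw [h0, AlgHomClass.commutes]
    exact (Algebra.commutes r b).symm
  | id => rwa [cfcHom_id ha']
  | star_id => rw [star_trivial, cfcHom_id ha']; exact hab
  | add f g hf hg => rw [map_add]; exact hf.add_right hg
  | mul f g hf hg => rw [map_mul]; exact hf.mul_right hg
  | frequently f hf =>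
    have hcl : IsClosed {g : C(spectrum ℝ a, ℝ) | Commute b (cfcHom ha' g)} :=
      isClosed_eq ((continuous_mul_left b).comp hcont) ((continuous_mul_right b).comp hcont)
    exact hcl.closure_subset (mem_closure_iff_frequently.mpr hf)

/-- Square root of a nonnegative operator commuting with everything commuting with it. -/
lemma exists_sqrt_commute {E : Type*} [NormedAddCommGroup E] [InnerProductSpace ℂ E]
    [CompleteSpace E] (a : E →L[ℂ] E) (ha : 0 ≤ a) :
    ∃ s : E →L[ℂ] E, IsSelfAdjoint s ∧ s * s = a ∧ ∀ b, Commute b a → Commute b s := by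
  have hsa : IsSelfAdjoint a := .of_nonneg ha
  refine ⟨cfc Real.sqrt a, cfc_predicate _ a, ?_, fun b hb => commute_cfc_of_commute a b hb _⟩
  rw [← cfc_mul Real.sqrt Real.sqrt a]
  rw [cfc_congr (g := fun x : ℝ => x)
    (fun x hx => Real.mul_self_sqrt (spectrum_nonneg_of_nonneg ha hx))]
  exact cfc_id' ℝ a

lemma adjoint_comp_self_nonneg' {E F : Type*} [NormedAddCommGroup E] [InnerProductSpace ℂ E]
    [CompleteSpace E] [NormedAddCommGroup F] [InnerProductSpace ℂ F] [CompleteSpace F]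
    (T : E →L[ℂ] F) : (0 : E →L[ℂ] E) ≤ (adjoint T).comp T := by
  rw [nonneg_iff_isPositive]
  simpa [ContinuousLinearMap.one_def] using isPositive_one.adjoint_conj T

/-! ### `PiLp 2` amplification machinery -/

noncomputable def piLpUniformEquiv (p : ℝ≥0∞) [Fact (1 ≤ p)] {ι : Type*} [Fintype ι]
    (β : ι → Type*) [∀ i, NormedAddCommGroup (β i)] : PiLp p β ≃ᵤ ∀ i, β i where
  toEquiv := WithLp.equiv p _
  uniformContinuous_toFun := (PiLp.lipschitzWith_ofLp p β).uniformContinuous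
  uniformContinuous_invFun :=
    ((PiLp.antilipschitzWith_ofLp p β).to_rightInverse
      (WithLp.equiv p _).right_inv).uniformContinuous

instance piLpCompleteSpace (p : ℝ≥0∞) [Fact (1 ≤ p)] {ι : Type*} [Fintype ι]
    (β : ι → Type*) [∀ i, NormedAddCommGroup (β i)] [∀ i, CompleteSpace (β i)] :
    CompleteSpace (PiLp p β) :=
  (piLpUniformEquiv p β).completeSpace_iff.mpr inferInstance

set_option linter.unusedSectionVars false

variable {n : ℕ} {H K : Type*}
  [NormedAddCommGroup H] [InnerProductSpace ℂ H] [CompleteSpace H]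
  [NormedAddCommGroup K] [InnerProductSpace ℂ K] [CompleteSpace K]

/-- projection onto the l-th coordinate of `PiLp 2`. -/
def projL (n : ℕ) (l : Fin n) : PiLp 2 (fun _ : Fin n => H) →L[ℂ] H :=
  PiLp.proj (p := 2) (𝕜 := ℂ) _ l

@[simp] lemma projL_apply (l : Fin n) (ξ : PiLp 2 (fun _ : Fin n => H)) :
    projL n l ξ = ξ l := rfl

/-- inclusion of the k-th coordinate into `PiLp 2`. -/
def iotaL (n : ℕ) (k : Fin n) : H →L[ℂ] PiLp 2 (fun _ : Fin n => H) :=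
  adjoint (projL n k)

lemma adjoint_projL (k : Fin n) : adjoint (projL (H := H) n k) = iotaL n k := rfl

lemma inner_iotaL_right (k : Fin n) (ξ : PiLp 2 (fun _ : Fin n => H)) (v : H) :
    ⟪ξ, iotaL n k v⟫_ℂ = ⟪ξ k, v⟫_ℂ := by
  rw [iotaL, adjoint_inner_right]; rfl

@[simp] lemma iotaL_coord (k l : Fin n) (v : H) :
    (iotaL n k v) l = if l = k then v else 0 := by
  have key : iotaL n k v = (WithLp.equiv 2 (Fin n → H)).symm (Pi.single k v) := by
    apply ext_inner_left ℂ
    intro ξ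
    rw [inner_iotaL_right, PiLp.inner_apply]
    rw [Finset.sum_eq_single_of_mem k (Finset.mem_univ k)]
    · simp
    · intro m _ hm
      simp [Pi.single_eq_of_ne hm, hm]
  rw [key]
  simp [Pi.single_apply]

lemma adjoint_iotaL (k : Fin n) : adjoint (iotaL (H := H) n k) = projL n k := by
  rw [iotaL, adjoint_adjoint]

lemma piLp_sum_coord {α : Type*} (s : Finset α) (f : α → PiLp 2 (fun _ : Fin n => H))
    (l : Fin n) : (∑ a ∈ s, f a) l = ∑ a ∈ s, (f a) l :=
  map_sum (projL (H := H) n l) f s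

lemma sum_iotaL_apply (η : PiLp 2 (fun _ : Fin n => H)) :
    ∑ m : Fin n, iotaL n m (η m) = η := by
  ext l
  rw [piLp_sum_coord]
  simp

/-- row operator built from a family of operators. -/
def rowL (w : Fin n → (H →L[ℂ] K)) : PiLp 2 (fun _ : Fin n => H) →L[ℂ] K :=
  ∑ k, (w k).comp (projL n k)

@[simp] lemma rowL_apply (w : Fin n → (H →L[ℂ] K)) (ξ : PiLp 2 (fun _ : Fin n => H)) :
    rowL w ξ = ∑ k, w k (ξ k) := by
  simp [rowL]

lemma rowL_iotaL (w : Fin n → (H →L[ℂ] K)) (k : Fin n) :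
    (rowL w).comp (iotaL n k) = w k := by
  ext v
  simp [apply_ite (w _) (α := H), Finset.sum_ite_eq']

/-- entries of an operator on `PiLp 2`. -/
def entL (T : PiLp 2 (fun _ : Fin n => H) →L[ℂ] PiLp 2 (fun _ : Fin n => H)) (l k : Fin n) :
    H →L[ℂ] H :=
  ((projL n l).comp T).comp (iotaL n k)

@[simp] lemma entL_apply (T : PiLp 2 (fun _ : Fin n => H) →L[ℂ] PiLp 2 (fun _ : Fin n => H))
    (l k : Fin n) (v : H) : entL T l k v = (T (iotaL n k v)) l := rfl

lemma apply_eq_sum_entL (T : PiLp 2 (fun _ : Fin n => H) →L[ℂ] PiLp 2 (fun _ : Fin n => H))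
    (ξ : PiLp 2 (fun _ : Fin n => H)) (l : Fin n) :
    (T ξ) l = ∑ k : Fin n, entL T l k (ξ k) := by
  conv_lhs => rw [← sum_iotaL_apply ξ]
  rw [map_sum, piLp_sum_coord]
  rfl

lemma entL_sum {α : Type*} (s : Finset α)
    (T : α → (PiLp 2 (fun _ : Fin n => H) →L[ℂ] PiLp 2 (fun _ : Fin n => H))) (l k : Fin n) :
    entL (∑ a ∈ s, T a) l k = ∑ a ∈ s, entL (T a) l k := by
  ext v
  simp [piLp_sum_coord]

lemma entL_comp (T U : PiLp 2 (fun _ : Fin n => H) →L[ℂ] PiLp 2 (fun _ : Fin n => H))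
    (l k : Fin n) :
    entL (T.comp U) l k = ∑ m : Fin n, (entL T l m).comp (entL U m k) := by
  ext v
  rw [ContinuousLinearMap.sum_apply]
  simp only [entL_apply, comp_apply]
  rw [apply_eq_sum_entL T (U (iotaL n k v)) l]
  rfl

lemma entL_adjoint (T : PiLp 2 (fun _ : Fin n => H) →L[ℂ] PiLp 2 (fun _ : Fin n => H))
    (l k : Fin n) : entL (adjoint T) l k = adjoint (entL T k l) := by
  rw [entL, entL, adjoint_comp, adjoint_comp, adjoint_iotaL, adjoint_projL, comp_assoc]

/-- amplification of an operator on `H` to `PiLp 2`. -/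
def ampL (n : ℕ) (w : H →L[ℂ] H) :
    PiLp 2 (fun _ : Fin n => H) →L[ℂ] PiLp 2 (fun _ : Fin n => H) :=
  ∑ k, ((iotaL n k).comp (w.comp (projL n k)))

@[simp] lemma ampL_coord (w : H →L[ℂ] H) (ξ : PiLp 2 (fun _ : Fin n => H)) (l : Fin n) :
    (ampL n w ξ) l = w (ξ l) := by
  rw [ampL, ContinuousLinearMap.sum_apply, piLp_sum_coord]
  simp [apply_ite w, Finset.sum_ite_eq]

lemma ampL_iotaL (w : H →L[ℂ] H) (k : Fin n) :
    (ampL n w).comp (iotaL n k) = (iotaL n k).comp w := by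
  ext v l
  simp [apply_ite w]

lemma commute_ampL (w : H →L[ℂ] H)
    (T : PiLp 2 (fun _ : Fin n => H) →L[ℂ] PiLp 2 (fun _ : Fin n => H))
    (h : ∀ l k, Commute w (entL T l k)) : Commute (ampL n w) T := by
  have happ : ∀ (l k : Fin n) (v : H), w (entL T l k v) = entL T l k (w v) := by
    intro l k v
    have := DFunLike.congr_fun (h l k).eq v
    simpa [mul_apply] using this
  rw [Commute, SemiconjBy, mul_def, mul_def]
  ext ξ l
  simp only [comp_apply]
  rw [ampL_coord, apply_eq_sum_entL T ξ l, apply_eq_sum_entL T (ampL n w ξ) l, map_sum]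
  refine Finset.sum_congr rfl fun k _ => ?_
  rw [happ l k, ampL_coord]

lemma commute_entL (w : H →L[ℂ] H)
    (T : PiLp 2 (fun _ : Fin n => H) →L[ℂ] PiLp 2 (fun _ : Fin n => H))
    (h : Commute (ampL n w) T) (l k : Fin n) : Commute w (entL T l k) := by
  have happ : ∀ ξ, ampL n w (T ξ) = T (ampL n w ξ) := fun ξ =>
    DFunLike.congr_fun h.eq ξ
  rw [Commute, SemiconjBy, mul_def, mul_def]
  ext v
  simp only [comp_apply, entL_apply]
  have h1 : w ((T (iotaL n k v)) l) = (ampL n w (T (iotaL n k v))) l := by rw [ampL_coord]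
  rw [h1, happ]
  have h2 : ampL n w (iotaL n k v) = iotaL n k (w v) :=
    DFunLike.congr_fun (ampL_iotaL w k) v
  rw [h2]

lemma entL_adjoint_row_comp_row (w w' : Fin n → (H →L[ℂ] K)) (l k : Fin n) :
    entL ((adjoint (rowL w)).comp (rowL w')) l k = (adjoint (w l)).comp (w' k) := by
  have h1 : (projL (H := H) n l).comp (adjoint (rowL w)) = adjoint ((rowL w).comp (iotaL n l)) := by
    rw [adjoint_comp, adjoint_iotaL]
  rw [entL, ← comp_assoc, h1, rowL_iotaL, comp_assoc, rowL_iotaL]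


end ConnesFusionAux

open ContinuousLinearMap in
/-- Positivity of the sesquilinear form defining the Connes fusion of three
modules.  Let `x₁,…,xₙ : H₀ → H_i`, `y₁,…,yₙ : H₀ → H_j` and `z₁,…,zₙ : H₀ → H_k` be bounded
operators such that the three families of "two-point" operators `xᵦ* xₐ`, `y_d* y_c`, `z_f* z_e`
on `H₀` pairwise commute.  Then `∑_{k,l} ⟨ xₗ* xₖ yₗ* yₖ zₗ* zₖ Ω , Ω ⟩` is a nonnegative real
number.  (Here `⟨·,·⟩` is linear in the first variable, so `⟨v, Ω⟩` is rendered as `⟪Ω, v⟫_ℂ`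
in Mathlib's convention.) -/
theorem statement4
    {H₀ Hi Hj Hk : Type*}
    [NormedAddCommGroup H₀] [InnerProductSpace ℂ H₀] [CompleteSpace H₀]
    [NormedAddCommGroup Hi] [InnerProductSpace ℂ Hi] [CompleteSpace Hi]
    [NormedAddCommGroup Hj] [InnerProductSpace ℂ Hj] [CompleteSpace Hj]
    [NormedAddCommGroup Hk] [InnerProductSpace ℂ Hk] [CompleteSpace Hk]
    (Ω : H₀) (n : ℕ)
    (x : Fin n → (H₀ →L[ℂ] Hi)) (y : Fin n → (H₀ →L[ℂ] Hj)) (z : Fin n → (H₀ →L[ℂ] Hk))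
    (hxy : ∀ a b c d : Fin n,
      Commute ((ContinuousLinearMap.adjoint (x b)).comp (x a))
        ((ContinuousLinearMap.adjoint (y d)).comp (y c)))
    (hxz : ∀ a b e f : Fin n,
      Commute ((ContinuousLinearMap.adjoint (x b)).comp (x a))
        ((ContinuousLinearMap.adjoint (z f)).comp (z e)))
    (hyz : ∀ c d e f : Fin n,
      Commute ((ContinuousLinearMap.adjoint (y d)).comp (y c))
        ((ContinuousLinearMap.adjoint (z f)).comp (z e))) :
    0 ≤ (∑ k : Fin n, ∑ l : Fin n,
        (inner (𝕜 := ℂ) Ω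
          ((ContinuousLinearMap.adjoint (x l)) ((x k)
            ((ContinuousLinearMap.adjoint (y l)) ((y k)
              ((ContinuousLinearMap.adjoint (z l)) ((z k) Ω)))))))).re ∧
    (∑ k : Fin n, ∑ l : Fin n,
        (inner (𝕜 := ℂ) Ω
          ((ContinuousLinearMap.adjoint (x l)) ((x k)
            ((ContinuousLinearMap.adjoint (y l)) ((y k)
              ((ContinuousLinearMap.adjoint (z l)) ((z k) Ω)))))))).im = 0 := by
  classical
  -- Step 1: the `z`-matrix is nonnegative; take its square root `s`.
  set Rz : PiLp 2 (fun _ : Fin n => H₀) →L[ℂ] PiLp 2 (fun _ : Fin n => H₀) :=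
    (adjoint (rowL z)).comp (rowL z) with hRzdef
  have hRz : 0 ≤ Rz := adjoint_comp_self_nonneg' (rowL z)
  obtain ⟨s, hs_sa, hss, hs_comm⟩ := exists_sqrt_commute Rz hRz
  have hRz_ent : ∀ l k, entL Rz l k = (adjoint (z l)).comp (z k) :=
    fun l k => entL_adjoint_row_comp_row z z l k
  have hs_adj : adjoint s = s := by
    rw [← ContinuousLinearMap.star_eq_adjoint]; exact hs_sa
  have hs_ent_adj : ∀ l k, adjoint (entL s l k) = entL s k l := by
    intro l k
    rw [← entL_adjoint, hs_adj]
  have hscomm : ∀ w : H₀ →L[ℂ] H₀, (∀ e f, Commute w ((adjoint (z f)).comp (z e))) →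
      ∀ l k, Commute w (entL s l k) := by
    intro w hw l k
    refine commute_entL w s (hs_comm (ampL n w) ?_) l k
    refine commute_ampL w Rz (fun l' k' => ?_)
    rw [hRz_ent]
    exact hw k' l'
  -- Step 2: the Schur-type `(y,z)`-matrix `Q` is a sum of squares, hence nonnegative.
  set V : Fin n → (PiLp 2 (fun _ : Fin n => H₀) →L[ℂ] Hj) :=
    (fun m => rowL (fun k => (y k).comp (entL s m k))) with hVdef
  set Q : PiLp 2 (fun _ : Fin n => H₀) →L[ℂ] PiLp 2 (fun _ : Fin n => H₀) :=
    ∑ m : Fin n, (adjoint (V m)).comp (V m) with hQdef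
  have hQ : 0 ≤ Q := Finset.sum_nonneg fun m _ => adjoint_comp_self_nonneg' (V m)
  have hscomp : s.comp s = Rz := by rw [← mul_def, hss]
  have hQ_ent : ∀ l k, entL Q l k =
      ((adjoint (y l)).comp (y k)).comp ((adjoint (z l)).comp (z k)) := by
    intro l k
    rw [hQdef, entL_sum]
    have hterm : ∀ m, entL ((adjoint (V m)).comp (V m)) l k
        = ((adjoint (y l)).comp (y k)).comp ((entL s l m).comp (entL s m k)) := by
      intro m
      rw [hVdef]
      rw [entL_adjoint_row_comp_row]
      rw [adjoint_comp, hs_ent_adj]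
      have hc : Commute ((adjoint (y l)).comp (y k)) (entL s l m) :=
        hscomm _ (fun e f => hyz k l e f) l m
      have hc' : (entL s l m).comp ((adjoint (y l)).comp (y k))
          = ((adjoint (y l)).comp (y k)).comp (entL s l m) := by
        have := hc.eq; rw [mul_def, mul_def] at this; exact this.symm
      calc ((entL s l m).comp (adjoint (y l))).comp ((y k).comp (entL s m k))
          = ((entL s l m).comp ((adjoint (y l)).comp (y k))).comp (entL s m k) := by
            rw [comp_assoc, comp_assoc, comp_assoc]
        _ = (((adjoint (y l)).comp (y k)).comp (entL s l m)).comp (entL s m k) := by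
            rw [hc']
        _ = ((adjoint (y l)).comp (y k)).comp ((entL s l m).comp (entL s m k)) := by
            rw [comp_assoc]
    rw [Finset.sum_congr rfl (fun m _ => hterm m), ← comp_finset_sum]
    congr 1
    rw [← entL_comp, hscomp, hRz_ent]
  -- Step 3: square root `t` of `Q`; its entries commute with the `x` two-point operators.
  obtain ⟨t, ht_sa, htt, ht_comm⟩ := exists_sqrt_commute Q hQ
  have ht_adj : adjoint t = t := by
    rw [← ContinuousLinearMap.star_eq_adjoint]; exact ht_sa
  have ht_ent_adj : ∀ l k, adjoint (entL t l k) = entL t k l := by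
    intro l k
    rw [← entL_adjoint, ht_adj]
  have htcomm : ∀ a b l k : Fin n, Commute ((adjoint (x b)).comp (x a)) (entL t l k) := by
    intro a b l k
    refine commute_entL _ t (ht_comm _ (commute_ampL _ Q fun l' k' => ?_)) l k
    rw [hQ_ent]
    have h1 : Commute ((adjoint (x b)).comp (x a)) ((adjoint (y l')).comp (y k')) :=
      hxy a b k' l'
    have h2 : Commute ((adjoint (x b)).comp (x a)) ((adjoint (z l')).comp (z k')) :=
      hxz a b k' l'
    have := h1.mul_right h2
    rwa [mul_def] at this
  -- Step 4: rewrite each term of the big sum.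
  have key : ∀ k l : Fin n,
      (inner (𝕜 := ℂ) Ω
        ((adjoint (x l)) ((x k)
          ((adjoint (y l)) ((y k)
            ((adjoint (z l)) ((z k) Ω)))))))
      = ∑ m : Fin n, ⟪(x l) (entL t m l Ω), (x k) (entL t m k Ω)⟫_ℂ := by
    intro k l
    have harg : (adjoint (y l)) ((y k) ((adjoint (z l)) ((z k) Ω))) = entL Q l k Ω := by
      rw [hQ_ent]; rfl
    rw [harg]
    have hQt : entL Q l k = ∑ m : Fin n, (entL t l m).comp (entL t m k) := by
      rw [← htt, mul_def, entL_comp]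
    rw [hQt, ContinuousLinearMap.sum_apply, map_sum, map_sum, inner_sum]
    refine Finset.sum_congr rfl fun m _ => ?_
    have hc : ((adjoint (x l)).comp (x k)).comp (entL t l m)
        = (entL t l m).comp ((adjoint (x l)).comp (x k)) := by
      have := (htcomm k l l m).eq; rw [mul_def, mul_def] at this; exact this
    have happ : (adjoint (x l)) ((x k) ((entL t l m) ((entL t m k) Ω)))
        = (entL t l m) ((adjoint (x l)) ((x k) ((entL t m k) Ω))) := by
      have := DFunLike.congr_fun hc ((entL t m k) Ω)
      simpa [comp_apply] using this
    rw [comp_apply, happ, ← adjoint_inner_left (entL t l m), ht_ent_adj,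
      adjoint_inner_right]
  -- Step 5: the total sum is a sum of squared norms.
  have main : (∑ k : Fin n, ∑ l : Fin n,
      (inner (𝕜 := ℂ) Ω
        ((adjoint (x l)) ((x k)
          ((adjoint (y l)) ((y k)
            ((adjoint (z l)) ((z k) Ω))))))))
      = ∑ m : Fin n, ⟪∑ j : Fin n, (x j) (entL t m j Ω), ∑ j : Fin n, (x j) (entL t m j Ω)⟫_ℂ := by
    rw [Finset.sum_congr rfl (fun k _ => Finset.sum_congr rfl (fun l _ => key k l))]
    rw [Finset.sum_congr rfl (fun k _ => Finset.sum_comm)]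
    rw [Finset.sum_comm]
    refine Finset.sum_congr rfl fun m _ => ?_
    rw [inner_sum]
    refine Finset.sum_congr rfl fun k _ => ?_
    rw [sum_inner]
  rw [main]
  constructor
  · rw [Complex.re_sum]
    refine Finset.sum_nonneg fun m _ => ?_
    have h := inner_self_nonneg (𝕜 := ℂ)
      (x := ∑ j : Fin n, (x j) (entL t m j Ω))
    exact h
  · rw [Complex.im_sum]
    refine Finset.sum_eq_zero fun m _ => ?_
    have h := inner_self_im (𝕜 := ℂ) (∑ j : Fin n, (x j) (entL t m j Ω))
    exact h
end

section
/- Let H₀, H_i, H_j be complex Hilbert spaces, N a von Neumann algebra on H₀ with commutant N′, and Ω ∈ H₀. Let π_i : N → B(H_i) and π_j : N′ → B(H_j) be unital *-homomorphisms. Suppose Z₁, Z₂ : H₀ → H_i are bounded operators with Z_m y = π_i(y) Z_m for all y ∈ N and m = 1,2, and W₁, W₂ : H₀ → H_j are bounded operators with W_m x = π_j(x) W_m for all x ∈ N′ and m = 1,2. Then Z₂* Z₁ ∈ N′, W₂* W₁ ∈ N, and the following four complex numbers are equal: ⟨ W₂* W₁ Z₂* Z₁ Ω , Ω ⟩ =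 ⟨ Z₂* Z₁ W₂* W₁ Ω , Ω ⟩ = ⟨ π_j(Z₂* Z₁) W₁ Ω , W₂ Ω ⟩ = ⟨ π_i(W₂* W₁) Z₁ Ω , Z₂ Ω ⟩. -/
open scoped InnerProductSpace InnerProduct

/-!
If `A₁, A₂ : H₀ → K` intertwine an algebra `S` of operators with a *-representation `π` of it,
then `A₂† A₁` commutes with `S`: taking adjoints in `A₂ y* = π(y*) A₂` moves `y` across `A₂†`,
and `A₁` carries `π(y)` back to `y`. Hence `Z₂* Z₁ ∈ N′` and `W₂* W₁ ∈ N′′ = N`, so these two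
operators commute, which is the first equality; the other two are the defining property of the
adjoint combined with the intertwining relation applied to `Z₂* Z₁` resp. `W₂* W₁` themselves.
-/

namespace ContinuousLinearMap

variable {H₀ K : Type*}
  [NormedAddCommGroup H₀] [InnerProductSpace ℂ H₀] [CompleteSpace H₀]
  [NormedAddCommGroup K] [InnerProductSpace ℂ K] [CompleteSpace K]

def IsIntertwiner {S : StarSubalgebra ℂ (H₀ →L[ℂ] H₀)} (π : S →⋆ₐ[ℂ] (K →L[ℂ] K))
    (A : H₀ →L[ℂ] K) : Prop :=
  ∀ y : S, A.comp (y : H₀ →L[ℂ] H₀) = (π y).comp A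

namespace IsIntertwiner

variable {S : StarSubalgebra ℂ (H₀ →L[ℂ] H₀)} {π : S →⋆ₐ[ℂ] (K →L[ℂ] K)} {A A₁ A₂ : H₀ →L[ℂ] K}

theorem map_apply (hA : IsIntertwiner π A) (y : S) (v : H₀) :
    π y (A v) = A ((y : H₀ →L[ℂ] H₀) v) :=
  (DFunLike.congr_fun (hA y) v).symm

theorem comp_adjoint (hA : IsIntertwiner π A) (y : S) :
    (y : H₀ →L[ℂ] H₀).comp (A†) = (A†).comp (π y) := by
  have h := congrArg adjoint (hA (star y))
  rwa [adjoint_comp, adjoint_comp, map_star, ← star_eq_adjoint, ← star_eq_adjoint,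
    StarMemClass.coe_star, star_star, star_star] at h

theorem commute_adjoint_comp (h₁ : IsIntertwiner π A₁) (h₂ : IsIntertwiner π A₂) (y : S) :
    (y : H₀ →L[ℂ] H₀) * (A₂†).comp A₁ = (A₂†).comp A₁ * y := by
  rw [mul_def, mul_def, ← comp_assoc, h₂.comp_adjoint, comp_assoc, ← h₁ y, comp_assoc]

theorem adjoint_comp_mem_commutant {M : VonNeumannAlgebra H₀}
    {π : M.toStarSubalgebra →⋆ₐ[ℂ] (K →L[ℂ] K)}
    (h₁ : IsIntertwiner π A₁) (h₂ : IsIntertwiner π A₂) : (A₂†).comp A₁ ∈ M.commutant :=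
  VonNeumannAlgebra.mem_commutant_iff.mpr fun g hg => h₁.commute_adjoint_comp h₂ ⟨g, hg⟩

theorem adjoint_comp_mem {M : VonNeumannAlgebra H₀}
    {π : M.commutant.toStarSubalgebra →⋆ₐ[ℂ] (K →L[ℂ] K)}
    (h₁ : IsIntertwiner π A₁) (h₂ : IsIntertwiner π A₂) : (A₂†).comp A₁ ∈ M := by
  simpa only [VonNeumannAlgebra.commutant_commutant] using h₁.adjoint_comp_mem_commutant h₂

end IsIntertwiner

end ContinuousLinearMap

open ContinuousLinearMap

/-- Equivalent formulas for the inner product defining the Connes fusion.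
Let `N` be a von Neumann algebra on `H₀` with commutant `N′`, `π_i : N → B(H_i)` and
`π_j : N′ → B(H_j)` unital *-homomorphisms, and let `Z₁, Z₂ : H₀ → H_i` intertwine `N` with
`π_i`, and `W₁, W₂ : H₀ → H_j` intertwine `N′` with `π_j`.  Then `Z₂* Z₁ ∈ N′`, `W₂* W₁ ∈ N`,
and `⟨W₂*W₁ Z₂*Z₁ Ω, Ω⟩ = ⟨Z₂*Z₁ W₂*W₁ Ω, Ω⟩ = ⟨π_j(Z₂*Z₁) W₁Ω, W₂Ω⟩ = ⟨π_i(W₂*W₁) Z₁Ω, Z₂Ω⟩`.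
(Here `⟨·,·⟩` is linear in the first variable, so `⟨u, v⟩` is rendered as `⟪v, u⟫_ℂ` in
Mathlib's convention.) -/
theorem statement5
    {H₀ Hi Hj : Type*}
    [NormedAddCommGroup H₀] [InnerProductSpace ℂ H₀] [CompleteSpace H₀]
    [NormedAddCommGroup Hi] [InnerProductSpace ℂ Hi] [CompleteSpace Hi]
    [NormedAddCommGroup Hj] [InnerProductSpace ℂ Hj] [CompleteSpace Hj]
    (N : VonNeumannAlgebra H₀) (Ω : H₀)
    (πi : ↥N.toStarSubalgebra →⋆ₐ[ℂ] (Hi →L[ℂ] Hi))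
    (πj : ↥N.commutant.toStarSubalgebra →⋆ₐ[ℂ] (Hj →L[ℂ] Hj))
    (Z₁ Z₂ : H₀ →L[ℂ] Hi) (W₁ W₂ : H₀ →L[ℂ] Hj)
    (hZ₁ : ∀ y : ↥N.toStarSubalgebra, Z₁.comp (y : H₀ →L[ℂ] H₀) = (πi y).comp Z₁)
    (hZ₂ : ∀ y : ↥N.toStarSubalgebra, Z₂.comp (y : H₀ →L[ℂ] H₀) = (πi y).comp Z₂)
    (hW₁ : ∀ x : ↥N.commutant.toStarSubalgebra, W₁.comp (x : H₀ →L[ℂ] H₀) = (πj x).comp W₁)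
    (hW₂ : ∀ x : ↥N.commutant.toStarSubalgebra, W₂.comp (x : H₀ →L[ℂ] H₀) = (πj x).comp W₂) :
    ∃ (h₁ : (ContinuousLinearMap.adjoint Z₂).comp Z₁ ∈ N.commutant)
      (h₂ : (ContinuousLinearMap.adjoint W₂).comp W₁ ∈ N),
      inner (𝕜 := ℂ) Ω
          (((ContinuousLinearMap.adjoint W₂).comp W₁)
            (((ContinuousLinearMap.adjoint Z₂).comp Z₁) Ω)) =
        inner (𝕜 := ℂ) Ω
          (((ContinuousLinearMap.adjoint Z₂).comp Z₁)
            (((ContinuousLinearMap.adjoint W₂).comp W₁) Ω)) ∧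
      inner (𝕜 := ℂ) Ω
          (((ContinuousLinearMap.adjoint Z₂).comp Z₁)
            (((ContinuousLinearMap.adjoint W₂).comp W₁) Ω)) =
        inner (𝕜 := ℂ) (W₂ Ω)
          ((πj ⟨(ContinuousLinearMap.adjoint Z₂).comp Z₁, h₁⟩) (W₁ Ω)) ∧
      inner (𝕜 := ℂ) (W₂ Ω)
          ((πj ⟨(ContinuousLinearMap.adjoint Z₂).comp Z₁, h₁⟩) (W₁ Ω)) =
        inner (𝕜 := ℂ) (Z₂ Ω)
          ((πi ⟨(ContinuousLinearMap.adjoint W₂).comp W₁, h₂⟩) (Z₁ Ω)) := by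
  have hZ : (Z₂†).comp Z₁ ∈ N.commutant := IsIntertwiner.adjoint_comp_mem_commutant hZ₁ hZ₂
  have hW : (W₂†).comp W₁ ∈ N := IsIntertwiner.adjoint_comp_mem hW₁ hW₂
  have hWZ : ⟪Ω, (W₂†).comp W₁ ((Z₂†).comp Z₁ Ω)⟫_ℂ = ⟪Ω, (Z₂†).comp Z₁ ((W₂†).comp W₁ Ω)⟫_ℂ := by
    rw [← mul_apply_eq_comp, VonNeumannAlgebra.mem_commutant_iff.mp hZ _ hW, mul_apply_eq_comp]
  refine ⟨hZ, hW, hWZ, ?_, ?_⟩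
  · rw [IsIntertwiner.map_apply hW₁, ← adjoint_inner_right]
    exact hWZ.symm
  · rw [IsIntertwiner.map_apply hW₁, IsIntertwiner.map_apply hZ₁, ← adjoint_inner_right,
      ← adjoint_inner_right]
    exact hWZ
end

section
/- Let H be a complex Hilbert space, 𝔇 ⊆ H a dense subspace, and B a closable operator on H with domain 𝔇. Let x be a bounded operator on H such that x𝔇 ⊆ 𝔇, x*𝔇 ⊆ 𝔇, and x B ξ = B x ξ and x* B ξ = B x* ξ for all ξ ∈ 𝔇. Then x B̄ ⊆ B̄ x, x* B̄ ⊆ B̄ x*, x B̄* ⊆ B̄* x, and x* B̄* ⊆ B̄* x* (containments of unbounded operators, B̄ denoting the closure of B); consequently x belongs to the commutant of the von Neumann algebra W*(B̄) generated by B̄, i.e. x commutes strongly with B. -/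
/-!
The hypotheses say exactly that `x ⊕ x` and `x* ⊕ x*` map the graph of `B` into itself. Being
continuous, they then map its closure, the graph of `B̄`, into itself, which is `x B̄ ⊆ B̄ x` and
`x* B̄ ⊆ B̄ x*`. Taking adjoints, `y S ⊆ S y` gives `y* S* ⊆ S* y*` for densely defined `S`, which
yields the other two containments. Hence `x` commutes with `B̄` and `B̄*`, i.e. lies in the set whose
commutant is `W*(B̄)`, so `x` lies in the double commutant of that set, the commutant of `W*(B̄)`.
-/

open scoped InnerProductSpace

noncomputable section

variable {H : Type*} [NormedAddCommGroup H] [InnerProductSpace ℂ H] [CompleteSpace H]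

/-- `x S ⊆ S x` for a bounded operator `x` and an unbounded operator `S`: for every
`ξ ∈ dom S` one has `x ξ ∈ dom S` and `S (x ξ) = x (S ξ)`. -/
def PMapCommute (x : H →L[ℂ] H) (S : H →ₗ.[ℂ] H) : Prop :=
  ∀ ξ : S.domain, ∃ h : x (ξ : H) ∈ S.domain, S ⟨x (ξ : H), h⟩ = x (S ξ)

/-- The set of bounded operators commuting with `S` and `S*` (in the containment sense). -/
def pmapCommutant (S : H →ₗ.[ℂ] H) : Set (H →L[ℂ] H) :=
  {x | PMapCommute x S ∧ PMapCommute x S.adjoint}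

/-- The von Neumann algebra `W*(S)` generated by a closed densely defined operator `S`,
defined as the commutant of the set of bounded operators commuting with `S` and `S*`. -/
def vnGen (S : H →ₗ.[ℂ] H) : Set (H →L[ℂ] H) :=
  Set.centralizer (pmapCommutant S)

namespace PMapCommute

variable {x : H →L[ℂ] H} {S : H →ₗ.[ℂ] H}

omit [CompleteSpace H] in
theorem iff_mapsTo_graph :
    PMapCommute x S ↔ Set.MapsTo (Prod.map x x) S.graph S.graph := by
  constructor
  · rintro h ⟨_, _⟩ hp
    obtain ⟨ξ, rfl, rfl⟩ := S.mem_graph_iff.1 hp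
    obtain ⟨hdom, heq⟩ := h ξ
    exact S.mem_graph_iff.2 ⟨⟨x ξ, hdom⟩, rfl, heq⟩
  · intro h ξ
    obtain ⟨η, hη, heq⟩ := S.mem_graph_iff.1 (h (S.mem_graph ξ))
    obtain ⟨η, hηdom⟩ := η
    subst hη
    exact ⟨hηdom, heq⟩

omit [CompleteSpace H] in
theorem closure (hS : S.IsClosable) (h : PMapCommute x S) : PMapCommute x S.closure := by
  rw [iff_mapsTo_graph, ← hS.graph_closure_eq_closure_graph, Submodule.topologicalClosure_coe]
  exact (iff_mapsTo_graph.1 h).closure (x.continuous.prodMap x.continuous)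

theorem adjoint (hS : Dense (S.domain : Set H)) (h : PMapCommute x S) :
    PMapCommute (ContinuousLinearMap.adjoint x) S.adjoint := by
  intro η
  have hformal : ∀ ξ : S.domain,
      ⟪ContinuousLinearMap.adjoint x (S.adjoint η), (ξ : H)⟫_ℂ
        = ⟪ContinuousLinearMap.adjoint x (η : H), S ξ⟫_ℂ := by
    intro ξ
    obtain ⟨hdom, heq⟩ := h ξ
    rw [ContinuousLinearMap.adjoint_inner_left, ContinuousLinearMap.adjoint_inner_left, ← heq]
    exact S.adjoint_isFormalAdjoint hS η ⟨x ξ, hdom⟩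
  have hdom : ContinuousLinearMap.adjoint x (η : H) ∈ S.adjoint.domain :=
    LinearPMap.mem_adjoint_domain_of_exists _ ⟨_, hformal⟩
  exact ⟨hdom, LinearPMap.adjoint_apply_eq hS ⟨_, hdom⟩ hformal⟩

end PMapCommute

/-- Let `B` be a closable operator on `H` with dense domain `𝔇`, and `x` a
bounded operator with `x𝔇 ⊆ 𝔇`, `x*𝔇 ⊆ 𝔇`, `xBξ = Bxξ` and `x*Bξ = Bx*ξ` on `𝔇`.  Then
`x B̄ ⊆ B̄ x`, `x* B̄ ⊆ B̄ x*`, `x B̄* ⊆ B̄* x`, `x* B̄* ⊆ B̄* x*`, and consequently `x` belongs to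
the commutant of the von Neumann algebra `W*(B̄)` generated by `B̄`, i.e. `x` commutes strongly
with `B`. -/
theorem statement6
    (B : H →ₗ.[ℂ] H)
    (hdense : Dense (B.domain : Set H))
    (hB : B.IsClosable)
    (x : H →L[ℂ] H)
    (hx : ∀ ξ : B.domain, x (ξ : H) ∈ B.domain)
    (hxstar : ∀ ξ : B.domain, (ContinuousLinearMap.adjoint x) (ξ : H) ∈ B.domain)
    (hcomm : ∀ ξ : B.domain, x (B ξ) = B ⟨x (ξ : H), hx ξ⟩)
    (hcommstar : ∀ ξ : B.domain,
      (ContinuousLinearMap.adjoint x) (B ξ) = B ⟨(ContinuousLinearMap.adjoint x) (ξ : H), hxstar ξ⟩) :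
    PMapCommute x B.closure ∧
    PMapCommute (ContinuousLinearMap.adjoint x) B.closure ∧
    PMapCommute x B.closure.adjoint ∧
    PMapCommute (ContinuousLinearMap.adjoint x) B.closure.adjoint ∧
    x ∈ Set.centralizer (vnGen B.closure) := by
  have hdense' : Dense (B.closure.domain : Set H) := hdense.mono B.le_closure.1
  have h₁ : PMapCommute x B.closure :=
    PMapCommute.closure hB fun ξ => ⟨hx ξ, (hcomm ξ).symm⟩
  have h₂ : PMapCommute (ContinuousLinearMap.adjoint x) B.closure :=
    PMapCommute.closure hB fun ξ => ⟨hxstar ξ, (hcommstar ξ).symm⟩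
  have h₃ : PMapCommute x B.closure.adjoint := by
    simpa only [ContinuousLinearMap.adjoint_adjoint] using h₂.adjoint hdense'
  exact ⟨h₁, h₂, h₃, h₁.adjoint hdense', Set.subset_centralizer_centralizer ⟨h₁, h₃⟩⟩

end
end
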